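/- The Wanas tensor of an AP-space satisfies the cyclic (first Bianchi-type) identity 𝔖_{μ,ν,σ} W^α_{μνσ} = 0, i.e. W^α_{μνσ} + W^α_{νσμ} + W^α_{σμν} = 0. -/

import Mathlib

/- Local coordinate formalization of linear connections, curvature, torsion and
covariant differentiation, following the index conventions of the paper:
A^μ_{|ν} = A^μ_{,ν} + Γ^μ_{εν} A^ε, and
R^α_{μνσ} = Γ^α_{μσ,ν} − Γ^α_{μν,σ} + Γ^ε_{μσ}Γ^α_{εν} − Γ^ε_{μν}Γ^α_{εσ}. -/

noncomputable section

open scoped BigOperators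

/-- Partial derivative of a scalar field in the direction of the ν-th coordinate. -/
def pd {n : ℕ} (f : (Fin n → ℝ) → ℝ) (ν : Fin n) (x : Fin n → ℝ) : ℝ :=
  fderiv ℝ f x (Pi.single ν 1)

/-- Coefficients Γ^α_{μν} of a linear connection (in global coordinates on ℝⁿ). -/
abbrev Conn (n : ℕ) := Fin n → Fin n → Fin n → (Fin n → ℝ) → ℝ

/-- Curvature tensor R^α_{μνσ} of a linear connection. -/
def curv {n : ℕ} (Γ : Conn n) (α μ ν σ : Fin n) (x : Fin n → ℝ) : ℝ :=
  pd (Γ α μ σ) ν x - pd (Γ α μ ν) σ x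
    + ∑ ε, Γ ε μ σ x * Γ α ε ν x - ∑ ε, Γ ε μ ν x * Γ α ε σ x

/-- Torsion tensor Λ^α_{μν} = Γ^α_{μν} − Γ^α_{νμ}. -/
def torsion {n : ℕ} (Γ : Conn n) : Conn n := fun α μ ν x => Γ α μ ν x - Γ α ν μ x

/-- The dual connection Γ̃^α_{μν} = Γ^α_{νμ}. -/
def dualConn {n : ℕ} (Γ : Conn n) : Conn n := fun α μ ν => Γ α ν μ

/-- The symmetric connection Γ̂^α_{μν} = (1/2)(Γ^α_{μν} + Γ^α_{νμ}). -/
def symConn {n : ℕ} (Γ : Conn n) : Conn n := fun α μ ν x => (Γ α μ ν x + Γ α ν μ x) / 2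

/-- Covariant derivative T^α_{μν|σ} of a (1,2)-tensor field with respect to Γ. -/
def covd12 {n : ℕ} (Γ T : Conn n) (α μ ν σ : Fin n) (x : Fin n → ℝ) : ℝ :=
  pd (T α μ ν) σ x + ∑ ε, Γ α ε σ x * T ε μ ν x
    - ∑ ε, Γ ε μ σ x * T α ε ν x - ∑ ε, Γ ε ν σ x * T α μ ε x

/-- Covariant derivative w_{μ|ν} of a covector field with respect to Γ. -/
def covd01 {n : ℕ} (Γ : Conn n) (w : Fin n → (Fin n → ℝ) → ℝ) (μ ν : Fin n)
    (x : Fin n → ℝ) : ℝ :=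
  pd (w μ) ν x - ∑ ε, Γ ε μ ν x * w ε x

/-- Covariant derivative T_{μν|σ} of a (0,2)-tensor field with respect to Γ. -/
def covd02 {n : ℕ} (Γ : Conn n) (T : Fin n → Fin n → (Fin n → ℝ) → ℝ) (μ ν σ : Fin n)
    (x : Fin n → ℝ) : ℝ :=
  pd (T μ ν) σ x - ∑ ε, Γ ε μ σ x * T ε ν x - ∑ ε, Γ ε ν σ x * T μ ε x

/-- Covariant derivative T^α_{μνσ|β} of a (1,3)-tensor field with respect to Γ. -/
def covd13 {n : ℕ} (Γ : Conn n) (T : Fin n → Fin n → Fin n → Fin n → (Fin n → ℝ) → ℝ)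
    (α μ ν σ β : Fin n) (x : Fin n → ℝ) : ℝ :=
  pd (T α μ ν σ) β x + ∑ ε, Γ α ε β x * T ε μ ν σ x
    - ∑ ε, Γ ε μ β x * T α ε ν σ x - ∑ ε, Γ ε ν β x * T α μ ε σ x
    - ∑ ε, Γ ε σ β x * T α μ ν ε x

/-- The Wanas tensor W^α_{μνσ} = Λ^α_{σν|μ} − Λ^ε_{σν} Λ^α_{εμ}. -/
def Wanas {n : ℕ} (Γ : Conn n) (α μ ν σ : Fin n) (x : Fin n → ℝ) : ℝ :=
  covd12 Γ (torsion Γ) α σ ν μ x - ∑ ε, torsion Γ ε σ ν x * torsion Γ α ε μ x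

/-- The connection is smooth. -/
def SmoothConn {n : ℕ} (Γ : Conn n) : Prop := ∀ α μ ν, ContDiff ℝ (⊤ : ℕ∞) (Γ α μ ν)

/-- The connection has identically vanishing curvature. -/
def Flat {n : ℕ} (Γ : Conn n) : Prop := ∀ α μ ν σ x, curv Γ α μ ν σ x = 0

/- Absolute parallelism (AP) geometry: a parallelization of ℝⁿ is given by n
vector fields λ_i with contravariant components `lam i μ` and covariant
components `lamd i μ`, mutually dual. -/

/-- The data (lam, lamd) forms a smooth AP-structure:
smoothness and the duality relations λ_i^μ λ_i_ν = δ^μ_ν, λ_i^μ λ_j_μ = δ_ij. -/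
def APSpace {n : ℕ} (lam lamd : Fin n → Fin n → (Fin n → ℝ) → ℝ) : Prop :=
  (∀ i μ, ContDiff ℝ (⊤ : ℕ∞) (lam i μ)) ∧ (∀ i μ, ContDiff ℝ (⊤ : ℕ∞) (lamd i μ)) ∧
  (∀ μ ν x, ∑ i, lam i μ x * lamd i ν x = if μ = ν then (1:ℝ) else 0) ∧
  (∀ i j x, ∑ μ, lam i μ x * lamd j μ x = if i = j then (1:ℝ) else 0)

/-- The canonical connection Γ^α_{μν} = λ_i^α λ_i_{μ,ν} of the AP-space. -/
def apConn {n : ℕ} (lam lamd : Fin n → Fin n → (Fin n → ℝ) → ℝ) : Conn n :=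
  fun α μ ν x => ∑ i, lam i α x * pd (lamd i μ) ν x

/-- The metric g_{μν} = λ_i_μ λ_i_ν of the AP-space. -/
def apMetric {n : ℕ} (lamd : Fin n → Fin n → (Fin n → ℝ) → ℝ)
    (μ ν : Fin n) (x : Fin n → ℝ) : ℝ := ∑ i, lamd i μ x * lamd i ν x

/-- The inverse metric g^{μν} = λ_i^μ λ_i^ν of the AP-space. -/
def apMetricInv {n : ℕ} (lam : Fin n → Fin n → (Fin n → ℝ) → ℝ)
    (μ ν : Fin n) (x : Fin n → ℝ) : ℝ := ∑ i, lam i μ x * lam i ν x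

/-- The Riemannian (Levi-Civita) connection of the metric of the AP-space:
Γ̊^α_{μν} = (1/2) g^{αε}(g_{εν,μ} + g_{εμ,ν} − g_{μν,ε}). -/
def apLC {n : ℕ} (lam lamd : Fin n → Fin n → (Fin n → ℝ) → ℝ) : Conn n :=
  fun α μ ν x => (1/2) * ∑ ε, apMetricInv lam α ε x *
    (pd (apMetric lamd ε ν) μ x + pd (apMetric lamd ε μ) ν x - pd (apMetric lamd μ ν) ε x)

/-- The contortion tensor γ^α_{μν} = Γ^α_{μν} − Γ̊^α_{μν}. -/
def apContortion {n : ℕ} (lam lamd : Fin n → Fin n → (Fin n → ℝ) → ℝ) : Conn n :=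
  fun α μ ν x => apConn lam lamd α μ ν x - apLC lam lamd α μ ν x


/-! ### Auxiliary lemmas -/

section Aux
variable {n : ℕ}

lemma pd_sub' {f g : (Fin n → ℝ) → ℝ} {x : Fin n → ℝ} (hf : DifferentiableAt ℝ f x)
    (hg : DifferentiableAt ℝ g x) (ν : Fin n) :
    pd (fun y => f y - g y) ν x = pd f ν x - pd g ν x := by
  simp [pd, fderiv_fun_sub hf hg]

lemma pd_sum_mul (f g : Fin n → (Fin n → ℝ) → ℝ) (x : Fin n → ℝ)
    (hf : ∀ i, DifferentiableAt ℝ (f i) x) (hg : ∀ i, DifferentiableAt ℝ (g i) x) (ν : Fin n) :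
    pd (fun y => ∑ i, f i y * g i y) ν x
      = ∑ i, (pd (f i) ν x * g i x + f i x * pd (g i) ν x) := by
  unfold pd
  rw [fderiv_fun_sum (A := fun i y => f i y * g i y) (fun i _ => (hf i).mul (hg i))]
  rw [ContinuousLinearMap.sum_apply]
  refine Finset.sum_congr rfl fun i _ => ?_
  rw [fderiv_fun_mul (hf i) (hg i)]
  simp only [ContinuousLinearMap.add_apply, ContinuousLinearMap.smul_apply, smul_eq_mul]
  ring

lemma contDiff_pd {f : (Fin n → ℝ) → ℝ} (hf : ContDiff ℝ (⊤ : ℕ∞) f) (ν : Fin n) :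
    ContDiff ℝ (⊤ : ℕ∞) (pd f ν) := by
  have h1 : ContDiff ℝ (⊤ : ℕ∞) (fderiv ℝ f) := hf.fderiv_right (by simp)
  exact h1.clm_apply contDiff_const

lemma pd_pd_comm {f : (Fin n → ℝ) → ℝ} (hf : ContDiff ℝ (⊤ : ℕ∞) f) (μ ν : Fin n) (x : Fin n → ℝ) :
    pd (pd f μ) ν x = pd (pd f ν) μ x := by
  have hsymm : IsSymmSndFDerivAt ℝ f x := hf.contDiffAt.isSymmSndFDerivAt (by rw [minSmoothness_of_isRCLikeNormedField]; exact WithTop.coe_le_coe.mpr le_top)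
  have hd : DifferentiableAt ℝ (fderiv ℝ f) x :=
    ((hf.fderiv_right (m := (⊤ : ℕ∞)) (by simp)).differentiable (by simp)) x
  have key : ∀ v w : Fin n → ℝ, fderiv ℝ (fun y => fderiv ℝ f y v) x w
      = fderiv ℝ (fderiv ℝ f) x w v := by
    intro v w
    rw [fderiv_clm_apply hd (differentiableAt_const v)]
    simp
  unfold pd
  rw [key, key, hsymm]

lemma apConn_contDiff {lam lamd : Fin n → Fin n → (Fin n → ℝ) → ℝ}
    (h : APSpace lam lamd) (α μ ν : Fin n) : ContDiff ℝ (⊤ : ℕ∞) (apConn lam lamd α μ ν) := by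
  have : apConn lam lamd α μ ν = fun x => ∑ i, lam i α x * pd (lamd i μ) ν x := rfl
  rw [this]
  exact ContDiff.sum fun i _ => (h.1 i α).mul (contDiff_pd (h.2.1 i μ) ν)

/-- Algebraic part: the cyclic sum of the Wanas tensor equals the cyclic
sum of curvatures, for any differentiable connection. -/
lemma cyclic_wanas_eq_cyclic_curv (Γ : Conn n)
    (hΓ : ∀ a b c, ContDiff ℝ (⊤ : ℕ∞) (Γ a b c)) (α μ ν σ : Fin n) (x : Fin n → ℝ) :
    Wanas Γ α μ ν σ x + Wanas Γ α ν σ μ x + Wanas Γ α σ μ ν x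
      = curv Γ α μ ν σ x + curv Γ α ν σ μ x + curv Γ α σ μ ν x := by
  have hD : ∀ a b c, DifferentiableAt ℝ (Γ a b c) x :=
    fun a b c => ((hΓ a b c).differentiable (by simp)) x
  have hsub : ∀ a b c d, pd (torsion Γ a b c) d x = pd (Γ a b c) d x - pd (Γ a c b) d x := by
    intro a b c d
    rw [show torsion Γ a b c = fun y => Γ a b c y - Γ a c b y from rfl]
    exact pd_sub' (hD a b c) (hD a c b) d
  have hW : ∀ μ ν σ : Fin n, Wanas Γ α μ ν σ x
      = (pd (Γ α σ ν) μ x - pd (Γ α ν σ) μ x)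
        + ∑ ε, (Γ α ε μ x * (Γ ε σ ν x - Γ ε ν σ x)
            - Γ ε σ μ x * (Γ α ε ν x - Γ α ν ε x)
            - Γ ε ν μ x * (Γ α σ ε x - Γ α ε σ x)
            - (Γ ε σ ν x - Γ ε ν σ x) * (Γ α ε μ x - Γ α μ ε x)) := by
    intro μ ν σ
    simp only [Wanas, covd12, hsub, torsion, Finset.sum_sub_distrib]
    ring
  have hC : ∀ μ ν σ : Fin n, curv Γ α μ ν σ x
      = (pd (Γ α μ σ) ν x - pd (Γ α μ ν) σ x)
        + ∑ ε, (Γ ε μ σ x * Γ α ε ν x - Γ ε μ ν x * Γ α ε σ x) := by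
    intro μ ν σ
    simp only [curv, Finset.sum_sub_distrib]
    ring
  have hkey : (∑ ε, (Γ α ε μ x * (Γ ε σ ν x - Γ ε ν σ x)
            - Γ ε σ μ x * (Γ α ε ν x - Γ α ν ε x)
            - Γ ε ν μ x * (Γ α σ ε x - Γ α ε σ x)
            - (Γ ε σ ν x - Γ ε ν σ x) * (Γ α ε μ x - Γ α μ ε x)))
      + (∑ ε, (Γ α ε ν x * (Γ ε μ σ x - Γ ε σ μ x)
            - Γ ε μ ν x * (Γ α ε σ x - Γ α σ ε x)
            - Γ ε σ ν x * (Γ α μ ε x - Γ α ε μ x)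
            - (Γ ε μ σ x - Γ ε σ μ x) * (Γ α ε ν x - Γ α ν ε x)))
      + (∑ ε, (Γ α ε σ x * (Γ ε ν μ x - Γ ε μ ν x)
            - Γ ε ν σ x * (Γ α ε μ x - Γ α μ ε x)
            - Γ ε μ σ x * (Γ α ν ε x - Γ α ε ν x)
            - (Γ ε ν μ x - Γ ε μ ν x) * (Γ α ε σ x - Γ α σ ε x)))
      = (∑ ε, (Γ ε μ σ x * Γ α ε ν x - Γ ε μ ν x * Γ α ε σ x))
        + (∑ ε, (Γ ε ν μ x * Γ α ε σ x - Γ ε ν σ x * Γ α ε μ x))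
        + (∑ ε, (Γ ε σ ν x * Γ α ε μ x - Γ ε σ μ x * Γ α ε ν x)) := by
    rw [← Finset.sum_add_distrib, ← Finset.sum_add_distrib,
        ← Finset.sum_add_distrib, ← Finset.sum_add_distrib]
    exact Finset.sum_congr rfl fun ε _ => by ring
  rw [hW μ ν σ, hW ν σ μ, hW σ μ ν, hC μ ν σ, hC ν σ μ, hC σ μ ν]
  linear_combination hkey

/-- The canonical AP-connection is flat. -/
lemma apConn_flat {lam lamd : Fin n → Fin n → (Fin n → ℝ) → ℝ}
    (h : APSpace lam lamd) : Flat (apConn lam lamd) := by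
  obtain ⟨hl, hld, hd3, hd4⟩ := h
  have hlD : ∀ i a (y : Fin n → ℝ), DifferentiableAt ℝ (lam i a) y :=
    fun i a y => ((hl i a).differentiable (by simp)) y
  have hpdD : ∀ i a b (y : Fin n → ℝ), DifferentiableAt ℝ (pd (lamd i a) b) y :=
    fun i a b y => ((contDiff_pd (hld i a) b).differentiable (by simp)) y
  have h1 : ∀ (a b c d : Fin n) (y : Fin n → ℝ), pd (apConn lam lamd a b c) d y
      = ∑ i, (pd (lam i a) d y * pd (lamd i b) c y
          + lam i a y * pd (pd (lamd i b) c) d y) := by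
    intro a b c d y
    rw [show apConn lam lamd a b c = fun z => ∑ i, lam i a z * pd (lamd i b) c z from rfl]
    exact pd_sum_mul _ _ y (fun i => hlD i a y) (fun i => hpdD i b c y) d
  have hstep : ∀ (i j d : Fin n) (y : Fin n → ℝ),
      ∑ ε, lam i ε y * pd (lamd j ε) d y = -∑ ε, pd (lam i ε) d y * lamd j ε y := by
    intro i j d y
    have hconst : (fun z => ∑ ε, lam i ε z * lamd j ε z)
        = fun _ => (if i = j then (1:ℝ) else 0) := funext fun z => hd4 i j z
    have h0 : pd (fun z => ∑ ε, lam i ε z * lamd j ε z) d y = 0 := by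
      rw [hconst]; simp [pd]
    rw [pd_sum_mul _ _ y (fun ε => hlD i ε y)
        (fun ε => ((hld j ε).differentiable (by simp)) y) d,
      Finset.sum_add_distrib] at h0
    linarith
  have hcontr : ∀ (i a d : Fin n) (y : Fin n → ℝ),
      ∑ ε, lam i ε y * apConn lam lamd a ε d y = -pd (lam i a) d y := by
    intro i a d y
    calc ∑ ε, lam i ε y * apConn lam lamd a ε d y
        = ∑ ε, ∑ j, lam j a y * (lam i ε y * pd (lamd j ε) d y) := by
          refine Finset.sum_congr rfl fun ε _ => ?_
          rw [show apConn lam lamd a ε d y = ∑ j, lam j a y * pd (lamd j ε) d y from rfl,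
            Finset.mul_sum]
          exact Finset.sum_congr rfl fun j _ => by ring
      _ = ∑ j, lam j a y * ∑ ε, lam i ε y * pd (lamd j ε) d y := by
          rw [Finset.sum_comm]
          exact Finset.sum_congr rfl fun j _ => by rw [Finset.mul_sum]
      _ = ∑ j, lam j a y * -∑ ε, pd (lam i ε) d y * lamd j ε y :=
          Finset.sum_congr rfl fun j _ => by rw [hstep i j d y]
      _ = ∑ j, ∑ ε, -(pd (lam i ε) d y * (lam j a y * lamd j ε y)) := by
          refine Finset.sum_congr rfl fun j _ => ?_
          rw [mul_neg, Finset.mul_sum, ← Finset.sum_neg_distrib]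
          exact Finset.sum_congr rfl fun ε _ => by ring
      _ = ∑ ε, ∑ j, -(pd (lam i ε) d y * (lam j a y * lamd j ε y)) := Finset.sum_comm
      _ = ∑ ε, -(pd (lam i ε) d y * ∑ j, lam j a y * lamd j ε y) := by
          refine Finset.sum_congr rfl fun ε _ => ?_
          rw [Finset.mul_sum, ← Finset.sum_neg_distrib]
      _ = ∑ ε, -(pd (lam i ε) d y * if a = ε then 1 else 0) :=
          Finset.sum_congr rfl fun ε _ => by rw [hd3 a ε y]
      _ = -pd (lam i a) d y := by simp
  have hquad : ∀ (a b c d : Fin n) (y : Fin n → ℝ),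
      ∑ ε, apConn lam lamd ε b c y * apConn lam lamd a ε d y
        = -∑ i, pd (lam i a) d y * pd (lamd i b) c y := by
    intro a b c d y
    calc ∑ ε, apConn lam lamd ε b c y * apConn lam lamd a ε d y
        = ∑ ε, ∑ i, pd (lamd i b) c y * (lam i ε y * apConn lam lamd a ε d y) := by
          refine Finset.sum_congr rfl fun ε _ => ?_
          rw [show apConn lam lamd ε b c y = ∑ i, lam i ε y * pd (lamd i b) c y from rfl,
            Finset.sum_mul]
          exact Finset.sum_congr rfl fun i _ => by ring
      _ = ∑ i, pd (lamd i b) c y * ∑ ε, lam i ε y * apConn lam lamd a ε d y := by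
          rw [Finset.sum_comm]
          exact Finset.sum_congr rfl fun i _ => by rw [Finset.mul_sum]
      _ = ∑ i, pd (lamd i b) c y * -pd (lam i a) d y :=
          Finset.sum_congr rfl fun i _ => by rw [hcontr i a d y]
      _ = -∑ i, pd (lam i a) d y * pd (lamd i b) c y := by
          rw [← Finset.sum_neg_distrib]
          exact Finset.sum_congr rfl fun i _ => by ring
  intro α μ ν σ x
  have hsymm2 : ∑ i, lam i α x * pd (pd (lamd i μ) σ) ν x
      = ∑ i, lam i α x * pd (pd (lamd i μ) ν) σ x :=
    Finset.sum_congr rfl fun i _ => by rw [pd_pd_comm (hld i μ) σ ν x]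
  simp only [curv]
  rw [h1 α μ σ ν x, h1 α μ ν σ x, hquad α μ σ ν x, hquad α μ ν σ x,
    Finset.sum_add_distrib, Finset.sum_add_distrib]
  linear_combination hsymm2

end Aux

/-- first Bianchi-type identity for the Wanas tensor:
𝔖_{μ,ν,σ} W^α_{μνσ} = 0. -/
theorem wanas_first_bianchi {n : ℕ}
    (lam lamd : Fin n → Fin n → (Fin n → ℝ) → ℝ) (hAP : APSpace lam lamd) :
    ∀ (α μ ν σ : Fin n) (x : Fin n → ℝ),
      Wanas (apConn lam lamd) α μ ν σ x + Wanas (apConn lam lamd) α ν σ μ x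
        + Wanas (apConn lam lamd) α σ μ ν x = 0 := by
  intro α μ ν σ x
  have hflat := apConn_flat hAP
  rw [cyclic_wanas_eq_cyclic_curv (apConn lam lamd)
      (fun a b c => apConn_contDiff hAP a b c) α μ ν σ x,
    hflat α μ ν σ x, hflat α ν σ μ x, hflat α σ μ ν x]
  ring
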